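/- Let K be a commutative ring and C a K-linear category. Let C⊕ denote the additive (matrix) completion of C, whose objects are finite tuples (x₁, …, x_n) of objects of C and whose morphisms are matrices of morphisms of C, with composition given by matrix multiplication; C⊕ inherits a K-linear structure. Then the canonical K-linear embedding F : C → C⊕, sending an object x to the one-entry tuple (x), induces an isomorphism HH₀(F) : HH₀(C) → HH₀(C⊕) of K-modules. -/

import Mathlib

/-!
For a commutative ring `K` and a `K`-linear category `C`, the zeroth Hochschild homology
(trace) is `HH₀(C) := (⨁ x : C, End x) / span_K { f∘g - g∘f }`. Any `K`-linear functor
induces a map on `HH₀` sending `[f]` to `[F(f)]`.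

STATEMENT: the canonical embedding `F : C ⥤ C⊕` of `C` into its additive (matrix)
completion — whose objects are finite tuples of objects of `C` and whose morphisms are
matrices of morphisms, composed by matrix multiplication — induces an isomorphism
`HH₀(F) : HH₀(C) → HH₀(C⊕)` of `K`-modules.  (The matrix completion is
`CategoryTheory.Mat_` in Mathlib, with embedding `Mat_.embedding`; it inherits a `K`-linear
structure, which we record as an instance below.)
-/

open CategoryTheory
open scoped DirectSum Classical

section MatLinear

variable (K : Type*) [CommRing K] (C : Type u) [Category.{v} C] [Preadditive C] [Linear K C]

noncomputable instance matHomModule {M N : Mat_ C} : Module K (M ⟶ N) :=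
  inferInstanceAs (Module K (∀ (i : M.ι) (j : N.ι), M.X i ⟶ N.X j))

/-- The `K`-linear structure on the matrix (additive) completion of a `K`-linear category. -/
noncomputable instance matLinear : Linear K (Mat_ C) where
  homModule _ _ := inferInstance
  smul_comp M N P r f g := by
    apply Mat_.hom_ext
    intro i k
    show ∑ j : N.ι, (r • f i j) ≫ g j k = r • ∑ j : N.ι, f i j ≫ g j k
    rw [Finset.smul_sum]
    exact Finset.sum_congr rfl fun j _ => Linear.smul_comp _ _ _ r (f i j) (g j k)
  comp_smul M N P f r g := by
    apply Mat_.hom_ext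
    intro i k
    show ∑ j : N.ι, f i j ≫ (r • g j k) = r • ∑ j : N.ι, f i j ≫ g j k
    rw [Finset.smul_sum]
    exact Finset.sum_congr rfl fun j _ => Linear.comp_smul _ _ _ (f i j) r (g j k)

end MatLinear

/-- The set of commutators `f∘g - g∘f` (for `f : x ⟶ y`, `g : y ⟶ x`) inside `⨁ x : C, End x`. -/
noncomputable def hhCommutators (K : Type*) [CommRing K] (C : Type*) [Category C]
    [Preadditive C] [Linear K C] : Set (⨁ x : C, (x ⟶ x)) :=
  { v | ∃ (x y : C) (f : x ⟶ y) (g : y ⟶ x),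
      v = DirectSum.of (fun z : C => z ⟶ z) y (g ≫ f)
        - DirectSum.of (fun z : C => z ⟶ z) x (f ≫ g) }

/-- The zeroth Hochschild homology (trace) of a `K`-linear category. -/
noncomputable abbrev HH0 (K : Type*) [CommRing K] (C : Type*) [Category C]
    [Preadditive C] [Linear K C] :=
  (⨁ x : C, (x ⟶ x)) ⧸ Submodule.span K (hhCommutators K C)

/-- The class `[f] ∈ HH₀(C)` of an endomorphism `f : x ⟶ x`. -/
noncomputable def HH0.cls (K : Type*) [CommRing K] {C : Type*} [Category C]
    [Preadditive C] [Linear K C] {x : C} (f : x ⟶ x) : HH0 K C :=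
  Submodule.Quotient.mk (DirectSum.of (fun z : C => z ⟶ z) x f)


/-!
A `K`-linear map out of `HH₀` is the same as a family of trace-like linear maps on the
endomorphism modules (compositions below are written in diagrammatic order). The matrix trace
`A ↦ ∑ᵢ [Aᵢᵢ]` is trace-like on `C⊕` because `∑ⱼ [(g f)ⱼⱼ] = ∑ᵢⱼ [gⱼᵢ fᵢⱼ] = ∑ᵢ [(f g)ᵢᵢ]`, so
it descends to `HH₀(C⊕) → HH₀(C)`. It is a left inverse of `HH₀(F)` because a one-entry matrix
has one diagonal entry. It is a right inverse because every object of `C⊕` is the biproduct of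
its entries: writing `𝟙 = ∑ᵢ pᵢ qᵢ` through the summands, so that `qᵢ A pᵢ = F(Aᵢᵢ)`, we get
`[A] = ∑ᵢ [A pᵢ qᵢ] = ∑ᵢ [qᵢ A pᵢ] = ∑ᵢ [F(Aᵢᵢ)]`.
-/

namespace HH0

variable (K : Type*) [CommRing K] {C : Type*} [Category C] [Preadditive C] [Linear K C]

noncomputable def clsₗ (x : C) : (x ⟶ x) →ₗ[K] HH0 K C :=
  (Submodule.mkQ _).comp (DirectSum.lof K C (fun z : C => z ⟶ z) x)

@[simp]
theorem clsₗ_apply {x : C} (f : x ⟶ x) : clsₗ K x f = HH0.cls K f := by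
  simp [clsₗ, HH0.cls, DirectSum.lof_eq_of]

theorem cls_comp_comm {x y : C} (f : x ⟶ y) (g : y ⟶ x) :
    HH0.cls K (g ≫ f) = HH0.cls K (f ≫ g) := by
  rw [HH0.cls, HH0.cls, Submodule.Quotient.eq]
  exact Submodule.subset_span ⟨x, y, f, g, rfl⟩

theorem cls_sum {x : C} {ι : Type*} (s : Finset ι) (f : ι → (x ⟶ x)) :
    HH0.cls K (∑ i ∈ s, f i) = ∑ i ∈ s, HH0.cls K (f i) := by
  simp_rw [← clsₗ_apply]
  exact map_sum _ _ _

theorem cls_eq_sum_of_sum_comp_eq_id {M : C} {ι : Type*} [Fintype ι] {X : ι → C}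
    (p : ∀ i, M ⟶ X i) (q : ∀ i, X i ⟶ M) (hpq : ∑ i, p i ≫ q i = 𝟙 M) (A : M ⟶ M) :
    HH0.cls K A = ∑ i, HH0.cls K (q i ≫ A ≫ p i) := by
  have hA : A = ∑ i, (A ≫ p i) ≫ q i := by
    simp_rw [Category.assoc, ← Preadditive.comp_sum, hpq, Category.comp_id]
  rw [congrArg (HH0.cls K) hA, cls_sum]
  exact Finset.sum_congr rfl fun i _ => cls_comp_comm K _ _

variable {K} {V : Type*} [AddCommGroup V] [Module K V]

noncomputable def lift (t : ∀ x : C, (x ⟶ x) →ₗ[K] V)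
    (ht : ∀ (x y : C) (f : x ⟶ y) (g : y ⟶ x), t y (g ≫ f) = t x (f ≫ g)) :
    HH0 K C →ₗ[K] V :=
  Submodule.liftQ _ (DirectSum.toModule K C V t) <| by
    rw [Submodule.span_le]
    rintro v ⟨x, y, f, g, rfl⟩
    simp only [SetLike.mem_coe, LinearMap.mem_ker, ← DirectSum.lof_eq_of K, map_sub,
      DirectSum.toModule_lof, ht, sub_self]

@[simp]
theorem lift_cls (t : ∀ x : C, (x ⟶ x) →ₗ[K] V)
    (ht : ∀ (x y : C) (f : x ⟶ y) (g : y ⟶ x), t y (g ≫ f) = t x (f ≫ g))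
    {x : C} (f : x ⟶ x) : lift t ht (HH0.cls K f) = t x f := by
  rw [HH0.cls, lift, Submodule.liftQ_apply, ← DirectSum.lof_eq_of K, DirectSum.toModule_lof]

theorem hom_ext {φ ψ : HH0 K C →ₗ[K] V}
    (h : ∀ (x : C) (f : x ⟶ x), φ (HH0.cls K f) = ψ (HH0.cls K f)) : φ = ψ := by
  refine Submodule.linearMap_qext _ (DirectSum.linearMap_ext K fun x => LinearMap.ext fun f => ?_)
  simpa [← clsₗ_apply, clsₗ] using h x f

variable (K) {D : Type*} [Category D] [Preadditive D] [Linear K D]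

noncomputable def map (F : C ⥤ D) [F.Additive] [F.Linear K] : HH0 K C →ₗ[K] HH0 K D :=
  lift (fun x => (clsₗ K (F.obj x)).comp (F.mapLinearMap K)) fun x y f g => by
    simp [cls_comp_comm]

@[simp]
theorem map_cls (F : C ⥤ D) [F.Additive] [F.Linear K] {x : C} (f : x ⟶ x) :
    map K F (HH0.cls K f) = HH0.cls K (F.map f) := by
  simp [map]

end HH0

namespace CategoryTheory.Mat_

variable (K : Type*) [CommRing K] {C : Type*} [Category C] [Preadditive C] [Linear K C]

instance (x : C) : Unique ((embedding C).obj x).ι :=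
  inferInstanceAs (Unique PUnit)

instance embedding_linear : (embedding C).Linear K where
  map_smul _ _ := rfl

noncomputable def entryₗ {M N : Mat_ C} (i : M.ι) (j : N.ι) : (M ⟶ N) →ₗ[K] (M.X i ⟶ N.X j) where
  toFun f := f i j
  map_add' _ _ := rfl
  map_smul' _ _ := rfl

@[simp]
theorem entryₗ_apply {M N : Mat_ C} (i : M.ι) (j : N.ι) (f : M ⟶ N) : entryₗ K i j f = f i j :=
  rfl

theorem sum_cls_diag_comp_comm {M N : Mat_ C} (f : M ⟶ N) (g : N ⟶ M) :
    ∑ j, HH0.cls K ((g ≫ f) j j) = ∑ i, HH0.cls K ((f ≫ g) i i) := by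
  simp_rw [comp_apply, HH0.cls_sum]
  rw [Finset.sum_comm]
  exact Finset.sum_congr rfl fun i _ => Finset.sum_congr rfl fun j _ => HH0.cls_comp_comm K _ _

noncomputable def diagTraceₗ (M : Mat_ C) : (M ⟶ M) →ₗ[K] HH0 K C :=
  ∑ i, (HH0.clsₗ K (M.X i)).comp (entryₗ K i i)

theorem diagTraceₗ_apply {M : Mat_ C} (A : M ⟶ M) :
    diagTraceₗ K M A = ∑ i, HH0.cls K (A i i) := by
  simp only [diagTraceₗ, LinearMap.sum_apply, LinearMap.comp_apply, entryₗ_apply,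
    HH0.clsₗ_apply]

noncomputable def hh0Trace : HH0 K (Mat_ C) →ₗ[K] HH0 K C :=
  HH0.lift (diagTraceₗ K) fun M N f g => by
    rw [diagTraceₗ_apply, diagTraceₗ_apply, sum_cls_diag_comp_comm]

@[simp]
theorem hh0Trace_cls {M : Mat_ C} (A : M ⟶ M) :
    hh0Trace K (HH0.cls K A) = ∑ i, HH0.cls K (A i i) := by
  rw [hh0Trace, HH0.lift_cls, diagTraceₗ_apply]

variable (M : Mat_ C)

noncomputable def rowIncl (i : M.ι) : (embedding C).obj (M.X i) ⟶ M :=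
  fun _ j => (𝟙 M : Hom M M) i j

noncomputable def colProj (i : M.ι) : M ⟶ (embedding C).obj (M.X i) :=
  fun j _ => (𝟙 M : Hom M M) j i

theorem sum_apply {N : Mat_ C} {ι : Type*} (s : Finset ι) (f : ι → (M ⟶ N)) (i : M.ι) (j : N.ι) :
    (∑ a ∈ s, f a) i j = ∑ a ∈ s, f a i j := by
  induction s using Finset.cons_induction with
  | empty => rfl
  | cons a s ha ih => rw [Finset.sum_cons, Finset.sum_cons, add_apply, ih]

theorem colProj_comp_rowIncl_apply (i j k : M.ι) :
    (colProj M i ≫ rowIncl M i) j k = (𝟙 M : Hom M M) j i ≫ (𝟙 M : Hom M M) i k :=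
  (comp_apply _ _ _ _).trans (Fintype.sum_unique _)

theorem sum_colProj_comp_rowIncl : ∑ i, colProj M i ≫ rowIncl M i = 𝟙 M := by
  ext j k
  calc (∑ i, colProj M i ≫ rowIncl M i) j k
      = ∑ i, (𝟙 M : Hom M M) j i ≫ (𝟙 M : Hom M M) i k := by
        rw [sum_apply]
        exact Finset.sum_congr rfl fun i _ => colProj_comp_rowIncl_apply M i j k
    _ = (𝟙 M ≫ 𝟙 M : M ⟶ M) j k := (comp_apply _ _ _ _).symm
    _ = (𝟙 M : M ⟶ M) j k := by rw [Category.comp_id]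

theorem rowIncl_comp_comp_colProj (A : M ⟶ M) (i : M.ι) :
    rowIncl M i ≫ A ≫ colProj M i = (embedding C).map (A i i) := by
  ext
  change (𝟙 M ≫ A ≫ 𝟙 M : M ⟶ M) i i = A i i
  rw [Category.id_comp, Category.comp_id]

theorem sum_cls_embedding_map_diag (A : M ⟶ M) :
    ∑ i, HH0.cls K ((embedding C).map (A i i)) = HH0.cls K A := by
  rw [HH0.cls_eq_sum_of_sum_comp_eq_id K _ _ (sum_colProj_comp_rowIncl M) A]
  simp only [rowIncl_comp_comp_colProj]

theorem hh0Trace_cls_embedding_map {x : C} (f : x ⟶ x) :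
    hh0Trace K (HH0.cls K ((embedding C).map f)) = HH0.cls K f :=
  (hh0Trace_cls K _).trans (Fintype.sum_unique _)

noncomputable def hh0EmbeddingEquiv : HH0 K C ≃ₗ[K] HH0 K (Mat_ C) :=
  LinearEquiv.ofLinearMap (f := HH0.map K (embedding C)) (g := hh0Trace K)
    (HH0.hom_ext fun M A => by simp [sum_cls_embedding_map_diag])
    (HH0.hom_ext fun x f => by simp only [LinearMap.comp_apply, HH0.map_cls,
      hh0Trace_cls_embedding_map, LinearMap.id_apply])

theorem hh0EmbeddingEquiv_cls {x : C} (f : x ⟶ x) :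
    hh0EmbeddingEquiv K (HH0.cls K f) = HH0.cls K ((embedding C).map f) :=
  HH0.map_cls K _ f

end CategoryTheory.Mat_

theorem hh0_matrix_completion_iso (K : Type*) [CommRing K]
    (C : Type u) [Category.{v} C] [Preadditive C] [Linear K C] :
    ∃ φ : HH0 K C →ₗ[K] HH0 K (Mat_ C),
      (∀ (x : C) (f : x ⟶ x), φ (HH0.cls K f) = HH0.cls K ((Mat_.embedding C).map f)) ∧
        Function.Bijective φ := by
  exact ⟨(Mat_.hh0EmbeddingEquiv K).toLinearMap, fun _ => Mat_.hh0EmbeddingEquiv_cls K,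
    (Mat_.hh0EmbeddingEquiv K).bijective⟩
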